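/- arXiv:0906.1125 — 2 statements merged into one kernel-verified Lean document; each statement's English description precedes it below -/
import Mathlib

section
/- Let D be a division ring that is not commutative, let n ≥ 1, and let R = Matrix (Fin n) (Fin n) D be the ring of n × n matrices over D. Then there exists no additive closed symmetric monoidal structure on the category of left R-modules. -/
/-!
In an additive monoidal category the endomorphisms of the unit object commute (Eckmann–Hilton),
and the unit is nonzero unless every object is. Over `Mₙ(D)` every nonzero module `K` receives an
injective map from the simple module `Dⁿ`, and it splits because `Mₙ(D)` is semisimple. Hence
`End(Dⁿ)`, which contains `Dᵐᵒᵖ` acting by right scalar multiplication, embeds multiplicatively in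
`End(K)`; for `K` the unit object this forces `D` to be commutative.
-/

open CategoryTheory MonoidalCategory

universe u

/-- An additive closed symmetric monoidal structure on the category of left `R`-modules:
a monoidal structure which is symmetric, closed, and additive (preadditive) in each variable. -/
structure AddClosedSymmMonStruct (R : Type u) [Ring R] : Type (u + 1) where
  mon : MonoidalCategory (ModuleCat.{u} R)
  symm : @SymmetricCategory (ModuleCat.{u} R) _ mon
  closed : @MonoidalClosed (ModuleCat.{u} R) _ mon
  preadd : @MonoidalPreadditive (ModuleCat.{u} R) _ _ mon

/-- The unit object of the structure. -/
def AddClosedSymmMonStruct.unit {R : Type u} [Ring R] (s : AddClosedSymmMonStruct R) :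
    ModuleCat.{u} R :=
  letI := s.mon; 𝟙_ (ModuleCat.{u} R)

/-- The monoidal product (the "wedge") of the structure. -/
def AddClosedSymmMonStruct.wedge {R : Type u} [Ring R] (s : AddClosedSymmMonStruct R)
    (A B : ModuleCat.{u} R) : ModuleCat.{u} R :=
  letI := s.mon; A ⊗ B

open Matrix

namespace Module.End

variable {R V M : Type*} [Ring R] [AddCommGroup V] [Module R V] [AddCommGroup M] [Module R M]

theorem forall_commute_of_retraction {f : V →ₗ[R] M} {r : M →ₗ[R] V}
    (hrf : r ∘ₗ f = LinearMap.id) (hM : ∀ φ ψ : Module.End R M, Commute φ ψ)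
    (φ ψ : Module.End R V) : Commute φ ψ := by
  show φ * ψ = ψ * φ
  have h := congrArg (fun χ => r ∘ₗ χ ∘ₗ f) (hM (f ∘ₗ φ ∘ₗ r) (f ∘ₗ ψ ∘ₗ r)).eq
  simpa [Module.End.mul_eq_comp, LinearMap.comp_assoc, ← LinearMap.comp_assoc _ f r, hrf,
    ← LinearMap.comp_assoc _ r f] using h

theorem forall_commute_of_injective [IsSemisimpleModule R M] {f : V →ₗ[R] M}
    (hf : Function.Injective f) (hM : ∀ φ ψ : Module.End R M, Commute φ ψ)
    (φ ψ : Module.End R V) : Commute φ ψ := by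
  obtain ⟨r, hrf⟩ := IsSemisimpleModule.extension_property f hf LinearMap.id
  exact forall_commute_of_retraction hrf hM φ ψ

end Module.End

namespace Matrix

section Semiring

variable (R : Type*) [Semiring R] {n : Type*} [Fintype n] [DecidableEq n]
  {M : Type*} [AddCommMonoid M] [Module (Matrix n n R) M]

def colSMulHom (j : n) (y : M) : (n → R) →ₗ[Matrix n n R] M where
  toFun v := vecMulVec v (Pi.single j 1) • y
  map_add' v w := by simp [add_vecMulVec, add_smul]
  map_smul' A v := by simp [← mul_vecMulVec, mul_smul]

theorem exists_colSMulHom_ne_zero [Nontrivial M] : ∃ (j : n) (y : M), colSMulHom R j y ≠ 0 := by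
  obtain ⟨y, hy⟩ := exists_ne (0 : M)
  by_contra! h
  refine hy ?_
  calc y = (∑ j : n, single j j (1 : R)) • y := by rw [sum_single_one, one_smul]
    _ = ∑ j : n, colSMulHom R j y (Pi.single j 1) := by
      simp [colSMulHom, Finset.sum_smul, single_eq_single_vecMulVec_single]
    _ = 0 := by simp [h]

end Semiring

variable {D : Type*} [DivisionRing D] {n : Type*} [Fintype n] [DecidableEq n] [Nonempty n]

instance isSimpleModule_vec : IsSimpleModule (Matrix n n D) (n → D) := by
  refine isSimpleModule_iff_toSpanSingleton_surjective.mpr ⟨inferInstance, fun v hv w => ?_⟩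
  obtain ⟨i, hi⟩ := Function.ne_iff.mp hv
  refine ⟨vecMulVec w (Pi.single i (v i)⁻¹), ?_⟩
  simp [vecMulVec_mulVec, mul_inv_cancel₀ (MulOpposite.op_ne_zero_iff _ |>.mpr hi)]

theorem not_forall_commute_end_vec (hD : ¬ ∀ a b : D, a * b = b * a) :
    ¬ ∀ φ ψ : Module.End (Matrix n n D) (n → D), Commute φ ψ := by
  intro hc
  refine hD fun a b => ?_
  have h := (hc (Module.toModuleEnd _ _ (MulOpposite.op a))
    (Module.toModuleEnd _ _ (MulOpposite.op b))).eq
  have := congrFun (LinearMap.congr_fun h (fun _ => 1)) (Classical.arbitrary n)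
  simpa using this.symm

theorem not_forall_commute_end {M : Type*} [AddCommGroup M] [Module (Matrix n n D) M]
    [Nontrivial M] (hD : ¬ ∀ a b : D, a * b = b * a) :
    ¬ ∀ φ ψ : Module.End (Matrix n n D) M, Commute φ ψ := fun hM => by
  obtain ⟨j, y, hjy⟩ := exists_colSMulHom_ne_zero D (n := n) (M := M)
  exact not_forall_commute_end_vec hD
    (Module.End.forall_commute_of_injective
      ((colSMulHom D j y).injective_or_eq_zero.resolve_right hjy) hM)

end Matrix

namespace CategoryTheory.MonoidalCategory

variable {C : Type*} [Category C] [MonoidalCategory C]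

/-- `f` and `g` are conjugate to `𝟙_ C ◁ f` and `g ▷ 𝟙_ C`, which commute by the
interchange law. -/
theorem unit_endo_comp_comm (f g : 𝟙_ C ⟶ 𝟙_ C) : f ≫ g = g ≫ f := by
  have hf : 𝟙_ C ◁ f = (λ_ _).hom ≫ f ≫ (λ_ _).inv := by simp
  have hg : g ▷ 𝟙_ C = (λ_ _).hom ≫ g ≫ (λ_ _).inv := by
    simp [unitors_equal, unitors_inv_equal]
  simpa [hf, hg] using whisker_exchange g f

theorem isZero_of_isZero_unit [Preadditive C] [MonoidalPreadditive C] (h : Limits.IsZero (𝟙_ C))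
    (X : C) : Limits.IsZero X := by
  rw [Limits.IsZero.iff_id_eq_zero] at h ⊢
  calc 𝟙 X = (λ_ X).inv ≫ 𝟙 (𝟙_ C) ▷ X ≫ (λ_ X).hom := by simp
    _ = 0 := by simp [h]

end CategoryTheory.MonoidalCategory

/-- If `D` is a noncommutative division ring and `n ≥ 1`, then there is no additive closed
symmetric monoidal structure on the category of left modules over the matrix ring
`Matrix (Fin n) (Fin n) D`. -/
theorem no_structure_on_matrix_ring_of_noncommutative (D : Type) [DivisionRing D]
    (h : ¬ ∀ a b : D, a * b = b * a) (n : ℕ) (hn : 1 ≤ n) :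
    IsEmpty (AddClosedSymmMonStruct (Matrix (Fin n) (Fin n) D)) := by
  have : NeZero n := ⟨by omega⟩
  refine ⟨fun s => ?_⟩
  let := s.mon
  let := s.preadd
  let K := 𝟙_ (ModuleCat (Matrix (Fin n) (Fin n) D))
  have : Nontrivial K := by
    rw [← not_subsingleton_iff_nontrivial, ← ModuleCat.isZero_iff_subsingleton]
    intro hK
    exact not_subsingleton (Matrix (Fin n) (Fin n) D)
      (ModuleCat.isZero_of_iff_subsingleton.mp (isZero_of_isZero_unit hK _))
  refine Matrix.not_forall_commute_end (n := Fin n) (M := K) h fun φ ψ => ?_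
  exact congrArg ModuleCat.Hom.hom (unit_endo_comp_comm (ModuleCat.ofHom ψ) (ModuleCat.ofHom φ))
end

section
/- Let R be a ring with an additive closed symmetric monoidal structure on the category of left R-modules, with unit object K. If K has a submodule L with ⊥ < L < K (a nonzero proper submodule), then R has a two-sided ideal I with ⊥ < I < R (a nonzero proper two-sided ideal). Consequently, if R is a simple ring, then K is a simple left R-module. -/
/-!
For a submodule `L` of the unit `K`, the inclusion induces a natural transformation
`L ⊗ - ⟶ K ⊗ - ≅ 𝟭`. The range of its component at `R` is a left ideal stable under all
endomorphisms of the left module `R`, i.e. under right multiplications, so it is two-sided.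
Since `R` is a separator and every `L ⊗ -` is a left adjoint, `- ⊗ R` is faithful: the ideal
vanishes only if `L ↪ K` does, and it is all of `R` only if `- ⊗ R` sends `L ↪ K` to an
epimorphism, which kills `K ↠ K ⧸ L`.
-/

open CategoryTheory MonoidalCategory

universe u

open Limits

namespace CategoryTheory

lemma IsSeparator.hom_ext_of_isLeftAdjoint {C D : Type*} [Category C] [Category D] {G : C}
    (hG : IsSeparator G) (F : C ⥤ D) [F.IsLeftAdjoint] {X : C} {Y : D} {h₁ h₂ : F.obj X ⟶ Y}
    (H : ∀ g : G ⟶ X, F.map g ≫ h₁ = F.map g ≫ h₂) : h₁ = h₂ := by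
  let adj := Adjunction.ofIsLeftAdjoint F
  apply (adj.homEquiv X Y).injective
  refine hG.def _ _ fun g => ?_
  rw [← adj.homEquiv_naturality_left, ← adj.homEquiv_naturality_left, H]

lemma IsSeparator.faithful_tensorRight {C : Type*} [Category C] [MonoidalCategory C]
    [MonoidalClosed C] {G : C} (hG : IsSeparator G) : (tensorRight G).Faithful where
  map_injective {X Y} φ ψ h := by
    have hunit : φ ▷ 𝟙_ C = ψ ▷ 𝟙_ C := by
      refine hG.hom_ext_of_isLeftAdjoint (tensorLeft X) fun g => ?_
      change X ◁ g ≫ φ ▷ 𝟙_ C = X ◁ g ≫ ψ ▷ 𝟙_ C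
      rw [whisker_exchange, whisker_exchange]
      exact congrArg (· ≫ Y ◁ g) h
    simpa using congrArg (fun f => (ρ_ X).inv ≫ f ≫ (ρ_ Y).hom) hunit

end CategoryTheory

namespace ModuleCat

variable {R : Type u} [Ring R]

lemma isSeparator_self : IsSeparator (of R R) := fun X Y f g h ↦ by
  simp only [ObjectProperty.singleton_iff, ModuleCat.hom_ext_iff, hom_comp,
    LinearMap.ext_iff, LinearMap.coe_comp, Function.comp_apply, forall_eq'] at h
  ext x
  simpa using h (ofHom (LinearMap.toSpanSingleton R X x)) 1

def rangeIdeal {G : ModuleCat.{u} R ⥤ ModuleCat.{u} R} (α : G ⟶ 𝟭 _) : Ideal R :=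
  LinearMap.range (α.app (of R R)).hom

instance {G : ModuleCat.{u} R ⥤ ModuleCat.{u} R} (α : G ⟶ 𝟭 _) :
    (rangeIdeal α).IsTwoSided where
  mul_mem_of_left r := by
    rintro ⟨y, rfl⟩
    let ρ : of R R ⟶ of R R := ofHom (LinearMap.toSpanSingleton R R r)
    exact ⟨G.map ρ y, congr($(α.naturality ρ) y)⟩

end ModuleCat

namespace Submodule

variable {R : Type u} [Ring R] {M : Type u} [AddCommGroup M] [Module R M]
  {D : Type*} [Category D] [HasZeroMorphisms D] (F : ModuleCat.{u} R ⥤ D)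
  [F.PreservesZeroMorphisms] [F.Faithful]

lemma eq_bot_of_map_subtype_eq_zero {L : Submodule R M}
    (h : F.map (ModuleCat.ofHom L.subtype) = 0) : L = ⊥ := by
  have hsubtype : L.subtype = 0 := congrArg ModuleCat.Hom.hom ((F.map_eq_zero_iff).1 h)
  rw [← L.range_subtype, hsubtype, LinearMap.range_zero]

lemma eq_top_of_epi_map_subtype {L : Submodule R M}
    (h : Epi (F.map (ModuleCat.ofHom L.subtype))) : L = ⊤ := by
  have hcomp : ModuleCat.ofHom L.subtype ≫ ModuleCat.ofHom L.mkQ = 0 := by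
    ext x
    simp
  have hmap : F.map (ModuleCat.ofHom L.mkQ) = 0 := by
    rw [← cancel_epi (F.map (ModuleCat.ofHom L.subtype)), ← F.map_comp, hcomp]
    simp
  have hmkQ : L.mkQ = 0 := congrArg ModuleCat.Hom.hom ((F.map_eq_zero_iff).1 hmap)
  rw [← L.ker_mkQ, hmkQ, LinearMap.ker_zero]

end Submodule

namespace ModuleCat

variable {R : Type u} [Ring R] [MonoidalCategory (ModuleCat.{u} R)]
  [MonoidalPreadditive (ModuleCat.{u} R)]

lemma nontrivial_unit [Nontrivial R] : Nontrivial (𝟙_ (ModuleCat.{u} R)) := by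
  by_contra h
  rw [not_nontrivial_iff_subsingleton] at h
  have hR : IsZero (of R R) :=
    ((tensorRight (of R R)).map_isZero (isZero_of_subsingleton _)).of_iso (λ_ _).symm
  exact not_subsingleton R (isZero_iff_subsingleton.1 hR)

variable [MonoidalClosed (ModuleCat.{u} R)]

instance : (tensorRight (of R R)).Faithful := isSeparator_self.faithful_tensorRight

theorem exists_twoSidedIdeal_ne_bot_ne_top_of_unit_submodule
    (L : Submodule R (𝟙_ (ModuleCat.{u} R))) (hbot : L ≠ ⊥) (htop : L ≠ ⊤) :
    ∃ I : TwoSidedIdeal R, I ≠ ⊥ ∧ I ≠ ⊤ := by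
  let ι : of R L ⟶ 𝟙_ _ := ofHom L.subtype
  let α : tensorLeft (of R L) ⟶ 𝟭 _ := (tensoringLeft _).map ι ≫ (leftUnitorNatIso _).hom
  have hα : α.app (of R R) = (tensorRight (of R R)).map ι ≫ (λ_ _).hom := rfl
  refine ⟨(rangeIdeal α).toTwoSided, fun h => hbot ?_, fun h => htop ?_⟩
  · have hrange : rangeIdeal α = ⊥ := by
      rw [← Ideal.asIdeal_toTwoSided (rangeIdeal α), h, TwoSidedIdeal.bot_asIdeal]
    have hzero : α.app (of R R) = 0 := hom_ext (LinearMap.range_eq_bot.1 hrange)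
    refine L.eq_bot_of_map_subtype_eq_zero (tensorRight (of R R)) ?_
    rwa [hα, Preadditive.IsIso.comp_right_eq_zero] at hzero
  · have hrange : rangeIdeal α = ⊤ := by
      rw [← Ideal.asIdeal_toTwoSided (rangeIdeal α), h, TwoSidedIdeal.top_asIdeal]
    have : Epi (α.app (of R R)) := (epi_iff_range_eq_top _).2 hrange
    have hfac : (tensorRight (of R R)).map ι = α.app (of R R) ≫ (λ_ _).inv := by simp [hα]
    exact L.eq_top_of_epi_map_subtype (tensorRight (of R R)) (hfac ▸ inferInstance)

lemma isSimpleModule_unit [IsSimpleRing R] : IsSimpleModule R (𝟙_ (ModuleCat.{u} R)) := by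
  have : Nontrivial (Submodule R (𝟙_ (ModuleCat.{u} R))) :=
    (Submodule.nontrivial_iff R).2 nontrivial_unit
  have : IsSimpleOrder (Submodule R (𝟙_ (ModuleCat.{u} R))) := ⟨fun L => by
    by_contra! hL
    obtain ⟨I, hbot, htop⟩ := exists_twoSidedIdeal_ne_bot_ne_top_of_unit_submodule L hL.1 hL.2
    exact (IsSimpleOrder.eq_bot_or_eq_top I).elim hbot htop⟩
  exact ⟨⟩

end ModuleCat

/-- If the unit `K` of an additive closed symmetric monoidal structure on left `R`-modules has a
nonzero proper submodule, then `R` has a nonzero proper two-sided ideal.  Consequently, if `R` is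
a simple ring then `K` is a simple module. -/
theorem twoSidedIdeal_of_submodule_of_unit (R : Type u) [Ring R] (s : AddClosedSymmMonStruct R) :
    ((∃ L : Submodule R ↥(s.unit), ⊥ < L ∧ L < ⊤) →
      ∃ I : TwoSidedIdeal R, ⊥ < I ∧ I < ⊤) ∧
    (IsSimpleRing R → IsSimpleModule R ↥(s.unit)) := by
  let _ := s.mon
  let _ := s.closed
  let _ := s.preadd
  refine ⟨fun ⟨L, hbot, htop⟩ => ?_, fun _ => ModuleCat.isSimpleModule_unit⟩
  obtain ⟨I, hI₀, hI₁⟩ :=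
    ModuleCat.exists_twoSidedIdeal_ne_bot_ne_top_of_unit_submodule L hbot.ne' htop.ne
  exact ⟨I, hI₀.bot_lt, hI₁.lt_top⟩
end
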